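/- Let m, n be positive integers and let F be a binary image contained in {1,…,m} × {1,…,n} with row sums r_1,…,r_m and column sums c_1,…,c_n, such that r_1 = n and r_m = 0. Define b_i = #{j ∈ {1,…,n} : c_j ≥ i} and d_i = b_i − r_i for i = 1,…,m, and let L_h be the length of the horizontal boundary of F. Then for every integer t ≥ 0 and every choice of indices 1 ≤ i_1 < i_2 < ⋯ < i_{2t+1} ≤ m one has L_h ≥ 2n − d_{i_{2t+1}} + Σ_{s=1}^{t} (d_{i_{2s}} − d_{i_{2s+1}}) + d_{i_{2t+1}} − 2·d_{i_1}, i.e. L_h ≥ 2n − d_{i_{2t+1}} + d_{i_{2t}} − d_{i_{2t−1}} + ⋯ + d_{i_2} − 2·d_{i_1}. -/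

import Mathlib

/-!
Split `F` into its columns: if `S ⊆ {1, …, m}` is the set of rows of a column, that column
contributes `v(i) = [i ≤ #S] - [i ∈ S]` to `d_i`, and it contributes two boundary pairs per maximal
vertical run (its top and its bottom). So it suffices to show, for one column with `R` runs,
`2 - 2 v(i₁) + ∑ₛ (v(i₂ₛ) - v(i₂ₛ₊₁)) ≤ 2 R`. A drop `v(a) - v(b)` is paid for by a run starting
in `(a, b]`, up to one unit when `#S ∈ [a, b)`. Since row 1 is full, a run starts at row 1 and
pays for the constant `2`. The possible extra unit and the term `-2 v(i₁)` are paid for by runs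
starting at rows `> 1`, which exist unless `S = {1, …, #S}`, and then `v` vanishes on rows `≥ 1`.
-/

/-- The row sum `r i` of a binary image `F`: the number of points of `F` in row `i`. -/
def rowSum (F : Finset (ℤ × ℤ)) (i : ℤ) : ℕ := (F.filter fun p => p.1 = i).card

/-- The column sum `c j` of a binary image `F`: the number of points of `F` in column `j`. -/
def colSum (F : Finset (ℤ × ℤ)) (j : ℤ) : ℕ := (F.filter fun p => p.2 = j).card

/-- The length of the horizontal boundary of `F`: the number of pairs
`((i,j),(i',j'))` with `j = j'`, `|i - i'| = 1`, `(i,j) ∈ F` and `(i',j') ∉ F`. -/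
noncomputable def horizBoundaryLen (F : Finset (ℤ × ℤ)) : ℕ :=
  Set.ncard {q : (ℤ × ℤ) × (ℤ × ℤ) |
    q.1.2 = q.2.2 ∧ |q.1.1 - q.2.1| = 1 ∧ q.1 ∈ F ∧ q.2 ∉ F}

open Finset

def runStarts (S : Finset ℤ) : Finset ℤ := S.filter fun i => i - 1 ∉ S

/-- The contribution of a column with row set `S` to `d_i = b_i - r_i`. -/
def defect (S : Finset ℤ) (i : ℤ) : ℤ :=
  (if i ≤ (#S : ℤ) then 1 else 0) - (if i ∈ S then 1 else 0)

section Runs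

variable {S : Finset ℤ}

lemma mem_runStarts {r : ℤ} : r ∈ runStarts S ↔ r ∈ S ∧ r - 1 ∉ S := mem_filter

lemma exists_mem_runStarts_Ioc {a b : ℤ} (ha : a ∉ S) (hb : b ∈ S) (hab : a < b) :
    ∃ r ∈ runStarts S, r ∈ Ioc a b := by
  obtain ⟨r, hr, hmin⟩ :=
    (S.filter (· ∈ Ioc a b)).exists_min_image id ⟨b, by simp [hb, hab]⟩
  simp only [mem_filter, mem_Ioc, id] at hr hmin
  refine ⟨r, mem_runStarts.2 ⟨hr.1, fun h => ?_⟩, mem_Ioc.2 hr.2⟩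
  rcases eq_or_ne (r - 1) a with hra | hra
  · exact ha (hra ▸ h)
  · have := hmin (r - 1) ⟨h, by omega, by omega⟩
    omega

lemma Icc_subset_of_forall_runStarts {a c : ℤ} (hc : c ∈ S)
    (h : ∀ r ∈ runStarts S, a < r → c < r) : Icc a c ⊆ S := by
  intro i hi
  rw [mem_Icc] at hi
  by_contra hiS
  obtain ⟨r, hr, hri⟩ :=
    exists_mem_runStarts_Ioc hiS hc (lt_of_le_of_ne hi.2 (by rintro rfl; exact hiS hc))
  rw [mem_Ioc] at hri
  have := h r hr (by omega)
  omega

lemma defect_eq_zero_of_runStarts_le_one (hpos : ∀ i ∈ S, 1 ≤ i)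
    (h : ∀ r ∈ runStarts S, r ≤ 1) {i : ℤ} (hi : 1 ≤ i) : defect S i = 0 := by
  obtain ⟨c, rfl⟩ : ∃ c, S = Icc 1 c := by
    rcases S.eq_empty_or_nonempty with rfl | hne
    · exact ⟨0, rfl⟩
    refine ⟨S.max' hne, Subset.antisymm (fun x hx => mem_Icc.2 ⟨hpos x hx, S.le_max' x hx⟩) ?_⟩
    exact Icc_subset_of_forall_runStarts (S.max'_mem hne) fun r hr h1r => absurd (h r hr) (by omega)
  simp only [defect, Int.card_Icc, mem_Icc]
  split_ifs <;> omega

lemma defect_sub_defect_le {a b : ℤ} (hab : a < b) :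
    defect S a - defect S b ≤
      #(runStarts S ∩ Ioc a b) + if a ≤ #S ∧ (#S : ℤ) < b then 1 else 0 := by
  have hstart : a ∉ S → b ∈ S → 1 ≤ #(runStarts S ∩ Ioc a b) := fun ha hb =>
    let ⟨r, hr, hrab⟩ := exists_mem_runStarts_Ioc ha hb hab
    card_pos.2 ⟨r, mem_inter.2 ⟨hr, hrab⟩⟩
  unfold defect
  split_ifs <;> first | omega | have := hstart ‹_› ‹_›; omega

lemma card_inter_Ioc_add_card_inter_Ioc_le (s : Finset ℤ) {a b c e : ℤ} (hab : a ≤ b)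
    (hbc : b ≤ c) (hce : c ≤ e) :
    #(s ∩ Ioc a b) + #(s ∩ Ioc c e) ≤ #(s ∩ Ioc a e) := by
  rw [← card_union_of_disjoint]
  · refine card_le_card fun r => ?_
    simp only [mem_union, mem_inter, mem_Ioc]
    rintro (⟨hr, h₁, h₂⟩ | ⟨hr, h₁, h₂⟩) <;> exact ⟨hr, by omega, by omega⟩
  · refine disjoint_left.2 fun r h h' => ?_
    simp only [mem_inter, mem_Ioc] at h h'
    omega

lemma sum_defect_sub_defect_le (x : ℕ → ℤ) (t : ℕ)
    (hx : ∀ a b : ℕ, a < b → b ≤ 2 * t → x a < x b) :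
    ∑ s ∈ range t, (defect S (x (2 * s + 1)) - defect S (x (2 * s + 2))) ≤
      #(runStarts S ∩ Ioc (x 0) (x (2 * t))) +
        if x 0 ≤ #S ∧ (#S : ℤ) < x (2 * t) then 1 else 0 := by
  induction t with
  | zero => split_ifs <;> simp
  | succ t ih =>
    have h₀ : x 0 ≤ x (2 * t) := by
      rcases Nat.eq_zero_or_pos t with rfl | ht
      · rfl
      · exact (hx 0 _ (by omega) (by omega)).le
    have h₁ := hx (2 * t) (2 * t + 1) (by omega) (by omega)
    have h₂ := hx (2 * t + 1) (2 * t + 2) (by omega) (by omega)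
    have ih := ih fun a b hab hb => hx a b hab (by omega)
    have hpair := defect_sub_defect_le (S := S) h₂
    have hcard := card_inter_Ioc_add_card_inter_Ioc_le (runStarts S) h₀ h₁.le h₂.le
    rw [sum_range_succ, show 2 * (t + 1) = 2 * t + 2 by ring]
    split_ifs at ih hpair ⊢ <;> omega

lemma two_sub_two_mul_defect_add_sum_le (hpos : ∀ i ∈ S, 1 ≤ i) (h₁ : 1 ∈ S)
    (x : ℕ → ℤ) (t : ℕ) (hx₀ : 1 ≤ x 0) (hx : ∀ a b : ℕ, a < b → b ≤ 2 * t → x a < x b) :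
    2 - 2 * defect S (x 0) +
        ∑ s ∈ range t, (defect S (x (2 * s + 1)) - defect S (x (2 * s + 2))) ≤
      2 * #(runStarts S) := by
  have h₁s : 1 ∈ runStarts S := mem_runStarts.2 ⟨h₁, fun h => by have := hpos _ h; omega⟩
  by_cases hsegment : ∀ r ∈ runStarts S, r ≤ 1
  · have hzero : ∀ s ∈ range t, defect S (x (2 * s + 1)) - defect S (x (2 * s + 2)) = 0 :=
      fun s hs => by
        have hst := mem_range.1 hs
        have := hx 0 (2 * s + 1) (by omega) (by omega)
        have := hx (2 * s + 1) (2 * s + 2) (by omega) (by omega)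
        rw [defect_eq_zero_of_runStarts_le_one hpos hsegment (by omega),
          defect_eq_zero_of_runStarts_le_one hpos hsegment (by omega), sub_self]
    have := card_pos.2 ⟨1, h₁s⟩
    rw [sum_eq_zero hzero, defect_eq_zero_of_runStarts_le_one hpos hsegment hx₀]
    omega
  push Not at hsegment
  obtain ⟨r, hr, h1r⟩ := hsegment
  set P := (runStarts S).filter (· ≤ x 0)
  set Q := (runStarts S).filter fun r => ¬ r ≤ x 0
  have hPQ : #P + #Q = #(runStarts S) := card_filter_add_card_filter_not _
  have hP₁ : 1 ≤ #P := card_pos.2 ⟨1, mem_filter.2 ⟨h₁s, hx₀⟩⟩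
  have hP₂ : ∀ r ∈ runStarts S, 1 < r → r ≤ x 0 → 2 ≤ #P := fun r hr h1r hrx => by
    have : ({1, r} : Finset ℤ) ⊆ P := by
      simp only [insert_subset_iff, singleton_subset_iff, P, mem_filter]
      exact ⟨⟨h₁s, hx₀⟩, hr, hrx⟩
    simpa [card_pair (show (1 : ℤ) ≠ r by omega)] using card_le_card this
  have hQ : #(runStarts S ∩ Ioc (x 0) (x (2 * t))) ≤ #Q := card_le_card fun r hr => by
    simp only [mem_inter, mem_Ioc] at hr
    exact mem_filter.2 ⟨hr.1, by omega⟩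
  have hexcess : x 0 ∈ S → (#S : ℤ) < x 0 → 2 ≤ #P := fun hxS hlt => by
    by_contra hP
    have := card_le_card <| Icc_subset_of_forall_runStarts hxS fun r hr h1r =>
      lt_of_not_ge fun hrx => hP (hP₂ r hr h1r hrx)
    rw [Int.card_Icc] at this
    omega
  have hspare : 2 ≤ #P ∨ 1 ≤ #Q := by
    by_cases hrx : r ≤ x 0
    · exact Or.inl (hP₂ r hr h1r hrx)
    · exact Or.inr (card_pos.2 ⟨r, mem_filter.2 ⟨hr, hrx⟩⟩)
  have hchain := sum_defect_sub_defect_le (S := S) x t hx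
  rw [defect]
  split_ifs at hchain ⊢ <;> first | omega | have := hexcess ‹_› (by omega); omega

end Runs

/-- Both sides are `#F` minus the number of pairs `(p, p + v)` inside `F`. -/
lemma card_filter_add_notMem_eq_card_filter_sub_notMem {G : Type*} [AddCommGroup G]
    [DecidableEq G] (F : Finset G) (v : G) :
    #(F.filter fun p => p + v ∉ F) = #(F.filter fun p => p - v ∉ F) := by
  have hshift : #(F.filter fun p => p + v ∈ F) = #(F.filter fun p => p - v ∈ F) :=
    card_nbij' (· + v) (· - v) (fun p hp => by simp_all) (fun p hp => by simp_all)
      (fun p _ => by simp) (fun p _ => by simp)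
  have h₁ := card_filter_add_card_filter_not (s := F) fun p => p + v ∈ F
  have h₂ := card_filter_add_card_filter_not (s := F) fun p => p - v ∈ F
  omega

lemma horizBoundaryLen_eq (F : Finset (ℤ × ℤ)) :
    horizBoundaryLen F =
      #(F.filter fun p => p + (1, 0) ∉ F) + #(F.filter fun p => p - (1, 0) ∉ F) := by
  have hset :
      {q : (ℤ × ℤ) × (ℤ × ℤ) | q.1.2 = q.2.2 ∧ |q.1.1 - q.2.1| = 1 ∧ q.1 ∈ F ∧ q.2 ∉ F} =
      ↑((F.filter fun p => p + (1, 0) ∉ F).image (fun p => (p, p + (1, 0))) ∪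
        (F.filter fun p => p - (1, 0) ∉ F).image (fun p => (p, p - (1, 0)))) := by
    ext ⟨⟨i, j⟩, ⟨i', j'⟩⟩
    simp only [Set.mem_ofPred_eq, coe_union, coe_image, coe_filter, Set.mem_union, Set.mem_image,
      Prod.mk.injEq, ↓existsAndEq, Prod.mk_add_mk, Prod.mk_sub_mk, add_zero, sub_zero, true_and]
    grind
  have hinj (f : ℤ × ℤ → ℤ × ℤ) : Function.Injective fun p => (p, f p) :=
    fun p p' h => congrArg Prod.fst h
  rw [horizBoundaryLen, hset, Set.ncard_coe_finset, card_union_of_disjoint,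
    card_image_of_injective _ (hinj _), card_image_of_injective _ (hinj _)]
  simp only [disjoint_left, mem_image, not_exists, not_and]
  rintro _ ⟨p, -, rfl⟩ p' - h
  simp only [Prod.ext_iff, Prod.fst_add, Prod.fst_sub] at h
  omega

def column (F : Finset (ℤ × ℤ)) (j : ℤ) : Finset ℤ := (F.filter fun p => p.2 = j).image Prod.fst

section Columns

variable {F : Finset (ℤ × ℤ)}

@[simp] lemma mem_column {i j : ℤ} : i ∈ column F j ↔ (i, j) ∈ F := by
  simp [column]

lemma card_column (j : ℤ) : #(column F j) = colSum F j :=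
  card_image_of_injOn fun p hp q hq h => by
    simp only [coe_filter, Set.mem_ofPred_eq] at hp hq
    exact Prod.ext h (hp.2.trans hq.2.symm)

variable {J : Finset ℤ}

lemma rowSum_eq_card_filter (hF : ∀ p ∈ F, p.2 ∈ J) (i : ℤ) :
    rowSum F i = #(J.filter fun j => (i, j) ∈ F) := by
  refine card_nbij' Prod.snd (fun j => (i, j)) ?_ (fun j hj => by simp_all) ?_ (fun j _ => rfl)
  · rintro ⟨a, j⟩ hp
    obtain ⟨hpF, rfl⟩ := mem_filter.1 hp
    exact mem_filter.2 ⟨hF _ hpF, hpF⟩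
  · rintro ⟨a, j⟩ hp
    obtain ⟨-, rfl⟩ := mem_filter.1 hp
    rfl

lemma sum_defect_column (hF : ∀ p ∈ F, p.2 ∈ J) (i : ℤ) :
    ∑ j ∈ J, defect (column F j) i = #(J.filter fun j => i ≤ (colSum F j : ℤ)) - rowSum F i := by
  simp only [defect, sum_sub_distrib, sum_boole, card_column, mem_column,
    rowSum_eq_card_filter hF]

lemma card_filter_sub_notMem_eq_sum_card_runStarts (hF : ∀ p ∈ F, p.2 ∈ J) :
    #(F.filter fun p => p - (1, 0) ∉ F) = ∑ j ∈ J, #(runStarts (column F j)) := by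
  rw [card_eq_sum_card_fiberwise fun p hp => hF p (mem_filter.1 hp).1]
  refine sum_congr rfl fun j _ => card_nbij' Prod.fst (fun i => (i, j)) ?_ ?_ ?_ ?_
  · rintro ⟨i, j'⟩ hp
    simp only [coe_filter, mem_filter, Set.mem_ofPred_eq] at hp
    obtain ⟨⟨hi, hi'⟩, rfl⟩ := hp
    simpa [runStarts, hi] using hi'
  · intro i hi
    simp_all [runStarts]
  · rintro ⟨i, j⟩ hp
    simp_all
  · intro i _
    rfl

end Columns

/-- Here `idx 0, idx 1, …, idx (2t)` play the role of `i_1 < i_2 < ⋯ < i_{2t+1}`. -/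
theorem boundary_lower_bound_two_general (m n : ℕ)
    (F : Finset (ℤ × ℤ))
    (hF : ∀ p ∈ F, p.1 ∈ Finset.Icc (1 : ℤ) (m : ℤ) ∧ p.2 ∈ Finset.Icc (1 : ℤ) (n : ℤ))
    (hr1 : rowSum F 1 = n)
    (b : ℤ → ℕ)
    (hb : ∀ i : ℤ, b i = ((Finset.Icc (1 : ℤ) (n : ℤ)).filter fun j => i ≤ (colSum F j : ℤ)).card)
    (d : ℤ → ℤ) (hd : ∀ i : ℤ, d i = (b i : ℤ) - (rowSum F i : ℤ))
    (t : ℕ) (idx : ℕ → ℤ)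
    (hidx_mono : ∀ a b : ℕ, a < b → b ≤ 2 * t → idx a < idx b)
    (hidx_range : ∀ s : ℕ, s ≤ 2 * t → idx s ∈ Finset.Icc (1 : ℤ) (m : ℤ)) :
    (horizBoundaryLen F : ℤ) ≥
      2 * n - d (idx (2 * t))
        + (∑ s ∈ Finset.range t, (d (idx (2 * s + 1)) - d (idx (2 * s + 2))))
        + d (idx (2 * t)) - 2 * d (idx 0) := by
  have hcols : ∀ p ∈ F, p.2 ∈ Icc (1 : ℤ) n := fun p hp => (hF p hp).2
  have hd' : ∀ i, d i = ∑ j ∈ Icc (1 : ℤ) n, defect (column F j) i := fun i => by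
    rw [hd, hb, sum_defect_column hcols]
  have hrow₁ : ∀ j ∈ Icc (1 : ℤ) n, (1, j) ∈ F := by
    rw [← card_filter_eq_iff, ← rowSum_eq_card_filter hcols, hr1, Int.card_Icc]
    omega
  have hcol (j : ℤ) (hj : j ∈ Icc (1 : ℤ) n) :=
    two_sub_two_mul_defect_add_sum_le (fun i hi => (mem_Icc.1 (hF _ (mem_column.1 hi)).1).1)
      (mem_column.2 (hrow₁ j hj)) idx t (mem_Icc.1 (hidx_range 0 (Nat.zero_le _))).1 hidx_mono
  have hLh :
      (horizBoundaryLen F : ℤ) = ∑ j ∈ Icc (1 : ℤ) n, 2 * (#(runStarts (column F j)) : ℤ) := by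
    rw [horizBoundaryLen_eq, card_filter_add_notMem_eq_card_filter_sub_notMem,
      card_filter_sub_notMem_eq_sum_card_runStarts hcols, ← mul_sum]
    push_cast
    ring
  rw [ge_iff_le, hLh]
  refine (sum_le_sum hcol).trans_eq' ?_
  simp only [hd', sum_add_distrib, sum_sub_distrib, ← mul_sum, sum_const, Int.card_Icc,
    add_sub_cancel_right, Int.toNat_natCast, nsmul_eq_mul, sum_comm (s := range t)]
  ring

/-- Theorem 1, inequality (2): the lower bound
`L_h ≥ 2n - d_{i_{2t+1}} + Σ_{s=1}^{t} (d_{i_{2s}} - d_{i_{2s+1}}) + d_{i_{2t+1}} - 2 d_{i_1}`,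
i.e. `L_h ≥ 2n - d_{i_{2t+1}} + d_{i_{2t}} - d_{i_{2t-1}} + ⋯ + d_{i_2} - 2 d_{i_1}`.
Here `idx 0, idx 1, …, idx (2t)` play the role of `i_1 < i_2 < ⋯ < i_{2t+1}`. -/
theorem boundary_lower_bound_two (m n : ℕ) (hm : 0 < m) (hn : 0 < n)
    (F : Finset (ℤ × ℤ))
    (hF : ∀ p ∈ F, p.1 ∈ Finset.Icc (1 : ℤ) (m : ℤ) ∧ p.2 ∈ Finset.Icc (1 : ℤ) (n : ℤ))
    (hr1 : rowSum F 1 = n) (hrm : rowSum F (m : ℤ) = 0)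
    (b : ℤ → ℕ)
    (hb : ∀ i : ℤ, b i = ((Finset.Icc (1 : ℤ) (n : ℤ)).filter fun j => i ≤ (colSum F j : ℤ)).card)
    (d : ℤ → ℤ) (hd : ∀ i : ℤ, d i = (b i : ℤ) - (rowSum F i : ℤ))
    (t : ℕ) (idx : ℕ → ℤ)
    (hidx_mono : ∀ a b : ℕ, a < b → b ≤ 2 * t → idx a < idx b)
    (hidx_range : ∀ s : ℕ, s ≤ 2 * t → idx s ∈ Finset.Icc (1 : ℤ) (m : ℤ)) :
    (horizBoundaryLen F : ℤ) ≥
      2 * n - d (idx (2 * t))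
        + (∑ s ∈ Finset.range t, (d (idx (2 * s + 1)) - d (idx (2 * s + 2))))
        + d (idx (2 * t)) - 2 * d (idx 0) :=
  boundary_lower_bound_two_general m n F hF hr1 b hb d hd t idx hidx_mono hidx_range
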